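/- arXiv:2410.11017 — 5 statements merged into one kernel-verified Lean document; each statement's English description precedes it below -/
import Mathlib

section
/- If G : [0,∞) → ℝ is differentiable with G'(t) ≤ -G(t)²/2 - 3/2 for all t, then G is not defined for all time: there is no global differentiable solution, i.e., assuming G exists on all of [0,∞) leads to a contradiction. -/
/-!
If `G' ≤ -a (G² + c²)` with `a, c > 0`, then `arctan (G / c)` decreases at rate at least `a c`,
so `arctan (G t / c) + a c t` is antitone. Since `arctan` takes values in `(-π/2, π/2)`, it cannot
drop by `π`, which it would have to do by time `π / (a c)`. The inequality of the theorem is the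
case `a = 1/2`, `c = √3`.
-/

open Real Set

lemma arctan_div_deriv_le {g g' a c : ℝ} (hc : 0 < c) (h : g' ≤ -a * (g ^ 2 + c ^ 2)) :
    1 / (1 + (g / c) ^ 2) * (g' / c) ≤ -(a * c) := by
  have hpos : 0 < g ^ 2 + c ^ 2 := by positivity
  have hrw : 1 / (1 + (g / c) ^ 2) * (g' / c) = c * g' / (g ^ 2 + c ^ 2) := by
    field_simp
    ring
  rw [hrw, div_le_iff₀ hpos]
  nlinarith

lemma antitoneOn_arctan_div_add_mul {G : ℝ → ℝ} {a c : ℝ} (hc : 0 < c)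
    (hdiff : ∀ t ∈ Ici (0:ℝ), DifferentiableAt ℝ G t)
    (hineq : ∀ t ∈ Ici (0:ℝ), deriv G t ≤ -a * (G t ^ 2 + c ^ 2)) :
    AntitoneOn (fun t => arctan (G t / c) + a * c * t) (Ici 0) := by
  have hder : ∀ t ∈ Ici (0:ℝ), HasDerivAt (fun t => arctan (G t / c) + a * c * t)
      (1 / (1 + (G t / c) ^ 2) * (deriv G t / c) + a * c) t := fun t ht =>
    (((hdiff t ht).hasDerivAt.div_const c).arctan).add
      ((hasDerivAt_id t).const_mul (a * c) |>.congr_deriv (mul_one _))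
  refine antitoneOn_of_hasDerivWithinAt_nonpos (convex_Ici 0)
    (fun t ht => (hder t ht).continuousAt.continuousWithinAt)
    (fun t ht => (hder t (interior_subset ht)).hasDerivWithinAt) fun t ht => ?_
  linarith [arctan_div_deriv_le hc (hineq t (interior_subset ht))]

theorem not_forall_deriv_le_neg_mul_sq_add_sq {G : ℝ → ℝ} {a c : ℝ} (ha : 0 < a) (hc : 0 < c)
    (hdiff : ∀ t ∈ Ici (0:ℝ), DifferentiableAt ℝ G t)
    (hineq : ∀ t ∈ Ici (0:ℝ), deriv G t ≤ -a * (G t ^ 2 + c ^ 2)) : False := by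
  have hT : 0 ≤ π / (a * c) := by positivity
  have hdecr := antitoneOn_arctan_div_add_mul hc hdiff hineq self_mem_Ici hT hT
  have hshift : a * c * (π / (a * c)) = π := by field_simp
  simp only [mul_zero, add_zero, hshift] at hdecr
  linarith [neg_pi_div_two_lt_arctan (G (π / (a * c)) / c), arctan_lt_pi_div_two (G 0 / c)]

/-- There is no globally defined differentiable `G : [0,∞) → ℝ` satisfying the
differential inequality `G' ≤ -G²/2 - 3/2`. -/
theorem stmt2 (G : ℝ → ℝ)
    (hdiff : ∀ t ∈ Set.Ici (0:ℝ), DifferentiableAt ℝ G t)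
    (hineq : ∀ t ∈ Set.Ici (0:ℝ), deriv G t ≤ -(G t)^2/2 - 3/2) :
    False := by
  refine not_forall_deriv_le_neg_mul_sq_add_sq (a := 1 / 2) (c := √3) (by norm_num)
    (by positivity) hdiff fun t ht => ?_
  rw [sq_sqrt (by norm_num : (0:ℝ) ≤ 3)]
  linarith [hineq t ht]
end

section
/- Let U, V : [0,∞) → ℝ be differentiable, satisfying U' = -U² + V and V' = -V² - U, with U(0) - V(0) = 1 and U(0) + V(0) < -1 (equivalently V(0) < -1 given the first condition). Then U and V cannot both remain finite for all time: there is no globally defined differentiable solution. -/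
/-!
The quantity `U - V - 1` satisfies the linear equation `W' = -(U + V) W` and vanishes at `0`,
so by Grönwall it vanishes identically. Hence `V' = -(V² + V + 1) ≤ -(3/4) V²`, and a negative
solution of `V' ≤ -c V²` cannot survive past time `-1 / (c V 0)`: its reciprocal stays negative
but grows at rate at least `c`.
-/

open Set

theorem eqOn_zero_of_hasDerivAt_eq_smul {E : Type*} [NormedAddCommGroup E] [NormedSpace ℝ E]
    {a : ℝ → ℝ} {f : ℝ → E} {t₀ : ℝ} (ha : ContinuousOn a (Ici t₀))
    (hf : ∀ t ∈ Ici t₀, HasDerivAt f (a t • f t) t) (hf₀ : f t₀ = 0) :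
    EqOn f 0 (Ici t₀) := by
  intro T hT
  obtain ⟨K, hK⟩ := isCompact_Icc.exists_bound_of_continuousOn
    (ha.mono (Icc_subset_Ici_self : Icc t₀ T ⊆ _))
  refine eq_zero_of_abs_deriv_le_mul_abs_self_of_eq_zero_right (K := K)
    (fun t ht => (hf t ht.1).continuousAt.continuousWithinAt)
    (fun t ht => (hf t ht.1).hasDerivWithinAt) hf₀ (fun t ht => ?_) T ⟨hT, le_rfl⟩
  rw [norm_smul]
  exact mul_le_mul_of_nonneg_right (hK t (Ico_subset_Icc_self ht)) (norm_nonneg _)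

theorem lt_neg_inv_mul_of_hasDerivAt_le_neg_mul_sq {V V' : ℝ → ℝ} {c : ℝ}
    (hV : ∀ t ∈ Ici (0 : ℝ), HasDerivAt V (V' t) t)
    (hV' : ∀ t ∈ Ici (0 : ℝ), V' t ≤ -c * V t ^ 2)
    (hc : 0 < c) (hV₀ : V 0 < 0) {t : ℝ} (ht : 0 ≤ t) :
    t < -(c * V 0)⁻¹ := by
  have hanti : AntitoneOn V (Ici 0) := by
    refine antitoneOn_of_hasDerivWithinAt_nonpos (convex_Ici 0)
      (fun s hs => (hV s hs).continuousAt.continuousWithinAt)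
      (fun s hs => (hV s (interior_subset hs)).hasDerivWithinAt) (fun s hs => ?_)
    nlinarith [hV' s (interior_subset hs), sq_nonneg (V s)]
  have hneg : ∀ s ∈ Ici (0 : ℝ), V s < 0 := fun s hs =>
    (hanti self_mem_Ici hs hs).trans_lt hV₀
  have hinv : ∀ s ∈ Ici (0 : ℝ), HasDerivAt (fun s => (V s)⁻¹) (-V' s / V s ^ 2) s :=
    fun s hs => (hV s hs).inv (hneg s hs).ne
  have hgrowth : c * (t - 0) ≤ (V t)⁻¹ - (V 0)⁻¹ := by
    refine (convex_Ici 0).mul_sub_le_image_sub_of_le_deriv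
      (fun s hs => (hinv s hs).continuousAt.continuousWithinAt)
      (fun s hs => (hinv s (interior_subset hs)).differentiableAt.differentiableWithinAt)
      (fun s hs => ?_) 0 self_mem_Ici t ht ht
    have hs' := interior_subset hs
    rw [(hinv s hs').deriv, le_div_iff₀ (sq_pos_of_neg (hneg s hs'))]
    linarith [hV' s hs']
  have hVt := inv_lt_zero.mpr (hneg t ht)
  rw [mul_inv, neg_mul_eq_mul_neg, lt_inv_mul_iff₀ hc]
  linarith

/-- There is no globally defined differentiable solution `U, V : [0,∞) → ℝ` of the
system `U' = -U² + V`, `V' = -V² - U` with `U 0 - V 0 = 1` and `V 0 < -1`. -/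
theorem stmt4 (U V : ℝ → ℝ)
    (hU : ∀ t ∈ Set.Ici (0:ℝ), HasDerivAt U (-(U t)^2 + V t) t)
    (hV : ∀ t ∈ Set.Ici (0:ℝ), HasDerivAt V (-(V t)^2 - U t) t)
    (h1 : U 0 - V 0 = 1) (h2 : V 0 < -1) :
    False := by
  have hsum : ContinuousOn (fun t => -(U t + V t)) (Ici 0) := fun t ht =>
    ((hU t ht).continuousAt.add (hV t ht).continuousAt).neg.continuousWithinAt
  have hdiff : EqOn (fun t => U t - V t - 1) 0 (Ici 0) :=
    eqOn_zero_of_hasDerivAt_eq_smul hsum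
      (fun t ht => (((hU t ht).sub (hV t ht)).sub_const 1).congr_deriv <| by
        simp only [smul_eq_mul]; ring)
      (by simp [h1])
  have hV' : ∀ t ∈ Ici (0 : ℝ), -V t ^ 2 - U t ≤ -(3 / 4) * V t ^ 2 := fun t ht => by
    have hUV : U t - V t - 1 = 0 := hdiff ht
    nlinarith [sq_nonneg (V t + 2)]
  have hblowup := lt_neg_inv_mul_of_hasDerivAt_le_neg_mul_sq hV hV' (by norm_num) (by linarith)
    (t := -(3 / 4 * V 0)⁻¹) (neg_nonneg.mpr (inv_nonpos.mpr (by linarith)))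
  exact lt_irrefl _ hblowup
end

section
/- Let u, v be C² smooth solutions of ∂ₜu + u∂ₓu = v, ∂ₜv + v∂ₓv = -u on 𝕋 × [0,T) with u(·,t), v(·,t) odd for all t. Define U(t) = ∂ₓu(0,t) and V(t) = ∂ₓv(0,t). Then U' = -U² + V and V' = -V² - U. -/
/-! At `x = 0` the transport term `f ∂ₓ²f` of the differentiated equation
`∂ₓ∂ₜf + (∂ₓf)² + f ∂ₓ²f = ∂ₓg` vanishes because `f(0, t) = 0`, so by the symmetry of mixed
partials `∂ₜ(∂ₓf(0, t)) = ∂ₓg(0, t) - (∂ₓf(0, t))²`. Applied to `(f, g) = (u, v)` and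
`(f, g) = (v, -u)` this gives both Riccati-type equations. -/

open Real

section Partials

variable {E : Type*} [NormedAddCommGroup E] [NormedSpace ℝ E]

theorem DifferentiableAt.hasDerivAt_comp_prodMk_fst {G : ℝ × ℝ → E} {x t : ℝ}
    (hG : DifferentiableAt ℝ G (x, t)) :
    HasDerivAt (fun y => G (y, t)) (fderiv ℝ G (x, t) (1, 0)) x :=
  hG.hasFDerivAt.comp_hasDerivAt x ((hasDerivAt_id x).prodMk (hasDerivAt_const x t))

theorem DifferentiableAt.hasDerivAt_comp_prodMk_snd {G : ℝ × ℝ → E} {x t : ℝ}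
    (hG : DifferentiableAt ℝ G (x, t)) :
    HasDerivAt (fun s => G (x, s)) (fderiv ℝ G (x, t) (0, 1)) t :=
  hG.hasFDerivAt.comp_hasDerivAt t ((hasDerivAt_const t x).prodMk (hasDerivAt_id t))

end Partials

theorem ContDiff.comp_prodMk_const {n : WithTop ℕ∞} {f : ℝ → ℝ → ℝ}
    (hf : ContDiff ℝ n (fun p : ℝ × ℝ => f p.1 p.2)) (t : ℝ) :
    ContDiff ℝ n (fun y => f y t) :=
  hf.comp (contDiff_id.prodMk contDiff_const)

theorem hasDerivAt_deriv_fst_of_contDiff_two {f : ℝ → ℝ → ℝ}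
    (hf : ContDiff ℝ 2 (fun p : ℝ × ℝ => f p.1 p.2)) (x t : ℝ) :
    HasDerivAt (fun s => deriv (fun y => f y s) x)
      (deriv (fun y => deriv (fun s => f y s) t) x) t := by
  set F : ℝ × ℝ → ℝ := fun p => f p.1 p.2
  have hF : Differentiable ℝ F := hf.differentiable (by norm_num)
  have hF' : Differentiable ℝ (fderiv ℝ F) :=
    (hf.fderiv_right (m := 1) (by norm_num)).differentiable (by norm_num)
  have hx : (fun s => deriv (fun y => f y s) x) = fun s => fderiv ℝ F (x, s) (1, 0) := by
    funext s
    exact (hF (x, s)).hasDerivAt_comp_prodMk_fst.deriv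
  have ht : (fun y => deriv (fun s => f y s) t) = fun y => fderiv ℝ F (y, t) (0, 1) := by
    funext y
    exact (hF (y, t)).hasDerivAt_comp_prodMk_snd.deriv
  have hsymm : fderiv ℝ (fderiv ℝ F) (x, t) (0, 1) (1, 0)
      = fderiv ℝ (fderiv ℝ F) (x, t) (1, 0) (0, 1) :=
    hf.contDiffAt.isSymmSndFDerivAt (by simp) _ _
  rw [hx, ht, ((hF' (x, t)).hasDerivAt_comp_prodMk_fst.clm_apply
    (hasDerivAt_const x ((0 : ℝ), (1 : ℝ)))).deriv]
  simpa [hsymm] using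
    (hF' (x, t)).hasDerivAt_comp_prodMk_snd.clm_apply (hasDerivAt_const t ((1 : ℝ), (0 : ℝ)))

theorem hasDerivAt_sub_mul_deriv_of_eq_zero {φ ψ : ℝ → ℝ} {x c : ℝ}
    (hφ : DifferentiableAt ℝ φ x) (hφ' : DifferentiableAt ℝ (deriv φ) x)
    (hψ : HasDerivAt ψ c x) (hφx : φ x = 0) :
    HasDerivAt (fun y => ψ y - φ y * deriv φ y) (c - deriv φ x ^ 2) x := by
  have h := hψ.sub (hφ.hasDerivAt.mul hφ'.hasDerivAt)
  rw [hφx, zero_mul, add_zero, ← sq] at h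
  exact h

theorem hasDerivAt_deriv_fst_zero_of_transport {f g : ℝ → ℝ → ℝ} {t : ℝ}
    (hf : ContDiff ℝ 2 (fun p : ℝ × ℝ => f p.1 p.2))
    (hg : DifferentiableAt ℝ (fun y => g y t) 0)
    (heq : ∀ x, deriv (fun s => f x s) t + f x t * deriv (fun y => f y t) x = g x t)
    (hf0 : f 0 t = 0) :
    HasDerivAt (fun s => deriv (fun y => f y s) 0)
      (-(deriv (fun y => f y t) 0) ^ 2 + deriv (fun y => g y t) 0) t := by
  have hft : ContDiff ℝ 2 (fun y => f y t) := hf.comp_prodMk_const t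
  have hdt : (fun y => deriv (fun s => f y s) t)
      = fun y => g y t - f y t * deriv (fun y => f y t) y := by
    funext y
    linarith [heq y]
  have hmixed := hasDerivAt_deriv_fst_of_contDiff_two hf 0 t
  rw [hdt, (hasDerivAt_sub_mul_deriv_of_eq_zero (hft.differentiable (by norm_num) 0)
    (hft.differentiable_deriv_two 0) hg.hasDerivAt hf0).deriv] at hmixed
  convert hmixed using 1
  ring

theorem stmt6_general (T : ℝ) (u v : ℝ → ℝ → ℝ)
    (hu : ContDiff ℝ 2 (fun p : ℝ × ℝ => u p.1 p.2))
    (hv : ContDiff ℝ 2 (fun p : ℝ × ℝ => v p.1 p.2))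
    (heq1 : ∀ x : ℝ, ∀ t ∈ Set.Ico (0:ℝ) T,
      deriv (fun s => u x s) t + u x t * deriv (fun y => u y t) x = v x t)
    (heq2 : ∀ x : ℝ, ∀ t ∈ Set.Ico (0:ℝ) T,
      deriv (fun s => v x s) t + v x t * deriv (fun y => v y t) x = -u x t)
    (huodd : ∀ x, ∀ t ∈ Set.Ico (0:ℝ) T, u (-x) t = -u x t)
    (hvodd : ∀ x, ∀ t ∈ Set.Ico (0:ℝ) T, v (-x) t = -v x t) :
    ∀ t ∈ Set.Ico (0:ℝ) T,
      HasDerivWithinAt (fun s => deriv (fun y => u y s) 0)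
        (-(deriv (fun y => u y t) 0)^2 + deriv (fun y => v y t) 0)
        (Set.Ico 0 T) t ∧
      HasDerivWithinAt (fun s => deriv (fun y => v y s) 0)
        (-(deriv (fun y => v y t) 0)^2 - deriv (fun y => u y t) 0)
        (Set.Ico 0 T) t := by
  intro t ht
  have hu0 : u 0 t = 0 := by linarith [neg_zero (G := ℝ) ▸ huodd 0 t ht]
  have hv0 : v 0 t = 0 := by linarith [neg_zero (G := ℝ) ▸ hvodd 0 t ht]
  have hux : DifferentiableAt ℝ (fun y => u y t) 0 :=
    (hu.comp_prodMk_const t).differentiable (by norm_num) 0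
  have hvx : DifferentiableAt ℝ (fun y => v y t) 0 :=
    (hv.comp_prodMk_const t).differentiable (by norm_num) 0
  refine ⟨(hasDerivAt_deriv_fst_zero_of_transport hu hvx (heq1 · t ht) hu0).hasDerivWithinAt, ?_⟩
  have hV := hasDerivAt_deriv_fst_zero_of_transport (g := fun x t => -u x t) hv hux.neg
    (heq2 · t ht) hv0
  rw [deriv.fun_neg, ← sub_eq_add_neg] at hV
  exact hV.hasDerivWithinAt

/-- For C² odd 2π-periodic solutions of the local MRS system
`∂ₜu + u∂ₓu = v`, `∂ₜv + v∂ₓv = -u`, the quantities `U(t) = ∂ₓu(0,t)` and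
`V(t) = ∂ₓv(0,t)` satisfy `U' = -U² + V`, `V' = -V² - U`. -/
theorem stmt6 (T : ℝ) (u v : ℝ → ℝ → ℝ)
    (hu : ContDiff ℝ 2 (fun p : ℝ × ℝ => u p.1 p.2))
    (hv : ContDiff ℝ 2 (fun p : ℝ × ℝ => v p.1 p.2))
    (huper : ∀ x t, u (x + 2*π) t = u x t)
    (hvper : ∀ x t, v (x + 2*π) t = v x t)
    (heq1 : ∀ x : ℝ, ∀ t ∈ Set.Ico (0:ℝ) T,
      deriv (fun s => u x s) t + u x t * deriv (fun y => u y t) x = v x t)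
    (heq2 : ∀ x : ℝ, ∀ t ∈ Set.Ico (0:ℝ) T,
      deriv (fun s => v x s) t + v x t * deriv (fun y => v y t) x = -u x t)
    (huodd : ∀ x, ∀ t ∈ Set.Ico (0:ℝ) T, u (-x) t = -u x t)
    (hvodd : ∀ x, ∀ t ∈ Set.Ico (0:ℝ) T, v (-x) t = -v x t) :
    ∀ t ∈ Set.Ico (0:ℝ) T,
      HasDerivWithinAt (fun s => deriv (fun y => u y s) 0)
        (-(deriv (fun y => u y t) 0)^2 + deriv (fun y => v y t) 0)
        (Set.Ico 0 T) t ∧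
      HasDerivWithinAt (fun s => deriv (fun y => v y s) 0)
        (-(deriv (fun y => v y t) 0)^2 - deriv (fun y => u y t) 0)
        (Set.Ico 0 T) t :=
  stmt6_general T u v hu hv heq1 heq2 huodd hvodd
end

section
/- For smooth 2π-periodic functions u and v, |∫_{-π}^{π} ∂ₓ⁴(v∂ₓv) ∂ₓ⁴v dx| ≤ C ‖∂ₓv‖_{L^∞} ‖∂ₓ⁴v‖_{L²}² (Burgers-type commutator estimate at fourth-order). -/
open Real MeasureTheory intervalIntegral

lemma periodic_deriv' {f : ℝ → ℝ} {c : ℝ} (hp : Function.Periodic f c) :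
    Function.Periodic (deriv f) c := by
  intro x
  have h : f = fun y => f (y + c) := by funext y; exact (hp y).symm
  conv_rhs => rw [h]
  rw [deriv_comp_add_const]

lemma contDiff_iter {v : ℝ → ℝ} (hv : ContDiff ℝ (⊤:ℕ∞) v) (n : ℕ) :
    ContDiff ℝ (⊤:ℕ∞) (deriv^[n] v) := by
  induction n with
  | zero => exact hv
  | succ n ih =>
    rw [Function.iterate_succ_apply']
    exact (contDiff_infty_iff_deriv.mp ih).2

lemma periodic_iter {v : ℝ → ℝ} {c : ℝ} (hp : Function.Periodic v c) (n : ℕ) :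
    Function.Periodic (deriv^[n] v) c := by
  induction n with
  | zero => exact hp
  | succ n ih =>
    rw [Function.iterate_succ_apply']
    exact periodic_deriv' ih

lemma integral_deriv_per {F : ℝ → ℝ} (hF : ContDiff ℝ (⊤:ℕ∞) F)
    (hp : Function.Periodic F (2*π)) : ∫ x in (-π)..π, deriv F x = 0 := by
  rw [integral_deriv_eq_sub (fun x _ => (hF.differentiable (by simp)).differentiableAt)
    (((contDiff_infty_iff_deriv.mp hF).2.continuous).intervalIntegrable _ _)]
  have h := hp (-π)
  rw [show -π + 2*π = π by ring] at h
  rw [h]; ring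

lemma ibp_zero {F G : ℝ → ℝ} (hF : ContDiff ℝ (⊤:ℕ∞) F)
    (hp : Function.Periodic F (2*π)) (h : deriv F = G) :
    ∫ x in (-π)..π, G x = 0 := by
  rw [← h]; exact integral_deriv_per hF hp

lemma cs_sq {f g : ℝ → ℝ} (hf : Continuous f) (hg : Continuous g) :
    (∫ x in (-π)..π, f x * g x)^2
      ≤ (∫ x in (-π)..π, (f x)^2) * (∫ x in (-π)..π, (g x)^2) := by
  have hab : (-π:ℝ) ≤ π := by linarith [pi_pos]
  set S := ∫ x in (-π)..π, (f x)^2 with hS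
  set U := ∫ x in (-π)..π, f x * g x with hU
  set T := ∫ x in (-π)..π, (g x)^2 with hT
  have key : ∀ t : ℝ, 0 ≤ S * (t*t) + (2*U) * t + T := by
    intro t
    have h0 : 0 ≤ ∫ x in (-π)..π, (t * f x + g x)^2 :=
      intervalIntegral.integral_nonneg hab (fun x _ => sq_nonneg _)
    have hexp : (∫ x in (-π)..π, (t * f x + g x)^2)
        = ∫ x in (-π)..π, ((t*t) * (f x)^2 + ((2*t) * (f x * g x) + (g x)^2)) := by
      apply intervalIntegral.integral_congr
      intro x _; ring
    have i1 : IntervalIntegrable (fun x => (t*t) * (f x)^2) volume (-π) π :=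
      ((continuous_const.mul (hf.pow 2))).intervalIntegrable _ _
    have i2 : IntervalIntegrable (fun x => (2*t) * (f x * g x)) volume (-π) π :=
      ((continuous_const.mul (hf.mul hg))).intervalIntegrable _ _
    have i3 : IntervalIntegrable (fun x => (g x)^2) volume (-π) π :=
      (hg.pow 2).intervalIntegrable _ _
    rw [hexp, intervalIntegral.integral_add i1 (i2.add i3),
      intervalIntegral.integral_add i2 i3,
      intervalIntegral.integral_const_mul, intervalIntegral.integral_const_mul] at h0
    rw [← hS, ← hU, ← hT] at h0
    nlinarith [h0]
  have hd := discrim_le_zero key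
  rw [discrim] at hd
  nlinarith [hd]

lemma cs_abs {f g : ℝ → ℝ} (hf : Continuous f) (hg : Continuous g) :
    |∫ x in (-π)..π, f x * g x|
      ≤ Real.sqrt (∫ x in (-π)..π, (f x)^2) * Real.sqrt (∫ x in (-π)..π, (g x)^2) := by
  have hab : (-π:ℝ) ≤ π := by linarith [pi_pos]
  have hS : 0 ≤ ∫ x in (-π)..π, (f x)^2 :=
    intervalIntegral.integral_nonneg hab (fun x _ => sq_nonneg _)
  have h := cs_sq hf hg
  have h2 : |∫ x in (-π)..π, f x * g x| = Real.sqrt ((∫ x in (-π)..π, f x * g x)^2) := by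
    rw [Real.sqrt_sq_eq_abs]
  rw [h2, ← Real.sqrt_mul hS]
  exact Real.sqrt_le_sqrt h

lemma leibniz4 {v : ℝ → ℝ} (hv : ContDiff ℝ (⊤:ℕ∞) v) :
    deriv^[4] (fun y => v y * deriv v y)
      = fun x => 10*(deriv^[2] v x * deriv^[3] v x) + 5*(deriv v x * deriv^[4] v x)
          + v x * deriv^[5] v x := by
  have sm : ∀ n, ContDiff ℝ (⊤:ℕ∞) (deriv^[n] v) := contDiff_iter hv
  have df : ∀ n (x : ℝ), DifferentiableAt ℝ (deriv^[n] v) x :=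
    fun n x => ((sm n).differentiable (by simp)).differentiableAt
  have dd : ∀ n, deriv (deriv^[n] v) = deriv^[n+1] v :=
    fun n => (Function.iterate_succ_apply' deriv n v).symm
  have d1 : deriv^[1] v = deriv v := congrFun (Function.iterate_one deriv) v
  have dfv : ∀ x, DifferentiableAt ℝ v x := fun x => df 0 x
  have dfd : ∀ x, DifferentiableAt ℝ (deriv v) x := fun x => d1 ▸ df 1 x
  have dd' : deriv (deriv v) = deriv^[2] v := by rw [← d1]; exact dd 1
  have e1 : deriv (fun y => v y * deriv v y)
      = fun x => deriv v x * deriv v x + v x * deriv^[2] v x := by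
    funext x
    rw [deriv_fun_mul (dfv x) (dfd x), dd']
  have e2 : deriv (deriv (fun y => v y * deriv v y))
      = fun x => 3*(deriv v x * deriv^[2] v x) + v x * deriv^[3] v x := by
    rw [e1]; funext x
    rw [deriv_fun_add ((dfd x).fun_mul (dfd x)) ((dfv x).fun_mul (df 2 x)),
      deriv_fun_mul (dfd x) (dfd x), deriv_fun_mul (dfv x) (df 2 x), dd', dd 2]
    ring
  have e3 : deriv (deriv (deriv (fun y => v y * deriv v y)))
      = fun x => 3*(deriv^[2] v x * deriv^[2] v x) + 4*(deriv v x * deriv^[3] v x)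
          + v x * deriv^[4] v x := by
    rw [e2]; funext x
    rw [deriv_fun_add (((dfd x).fun_mul (df 2 x)).const_mul 3) ((dfv x).fun_mul (df 3 x)),
      deriv_const_mul 3 ((dfd x).fun_mul (df 2 x)),
      deriv_fun_mul (dfd x) (df 2 x), deriv_fun_mul (dfv x) (df 3 x), dd', dd 2, dd 3]
    ring
  have e4 : deriv (deriv (deriv (deriv (fun y => v y * deriv v y))))
      = fun x => 10*(deriv^[2] v x * deriv^[3] v x) + 5*(deriv v x * deriv^[4] v x)
          + v x * deriv^[5] v x := by
    rw [e3]; funext x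
    rw [deriv_fun_add
        (((((df 2 x).fun_mul (df 2 x)).const_mul 3).fun_add
          (((dfd x).fun_mul (df 3 x)).const_mul 4))) ((dfv x).fun_mul (df 4 x)),
      deriv_fun_add (((df 2 x).fun_mul (df 2 x)).const_mul 3) (((dfd x).fun_mul (df 3 x)).const_mul 4),
      deriv_const_mul 3 ((df 2 x).fun_mul (df 2 x)),
      deriv_const_mul 4 ((dfd x).fun_mul (df 3 x)),
      deriv_fun_mul (df 2 x) (df 2 x), deriv_fun_mul (dfd x) (df 3 x),
      deriv_fun_mul (dfv x) (df 4 x), dd', dd 2, dd 3, dd 4]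
    ring
  exact e4

/-- Fourth-order Burgers-type commutator estimate on the torus: there is a universal
constant `C > 0` such that for every smooth 2π-periodic `v`,
`|∫ ∂ₓ⁴(v∂ₓv) ∂ₓ⁴v dx| ≤ C ‖∂ₓv‖_{L^∞} ‖∂ₓ⁴v‖_{L²}²`. -/
theorem stmt14 :
    ∃ C : ℝ, 0 < C ∧
      ∀ v : ℝ → ℝ, ContDiff ℝ (⊤ : ℕ∞) v → Function.Periodic v (2*π) →
        |∫ x in (-π)..π, (deriv^[4] (fun y => v y * deriv v y) x) * (deriv^[4] v x)|
          ≤ C * (⨆ x : ℝ, |deriv v x|) * (∫ x in (-π)..π, (deriv^[4] v x)^2) := by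
  refine ⟨23, by norm_num, ?_⟩
  intro v hv hp
  have hab : (-π:ℝ) ≤ π := by linarith [pi_pos]
  have hv' : ContDiff ℝ (⊤:ℕ∞) v := hv.of_le (by simp)
  have sm : ∀ n, ContDiff ℝ (⊤:ℕ∞) (deriv^[n] v) := contDiff_iter hv'
  have ct : ∀ n, Continuous (deriv^[n] v) := fun n => (sm n).continuous
  have df : ∀ n (x : ℝ), DifferentiableAt ℝ (deriv^[n] v) x :=
    fun n x => ((sm n).differentiable (by simp)).differentiableAt
  have dd : ∀ n, deriv (deriv^[n] v) = deriv^[n+1] v :=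
    fun n => (Function.iterate_succ_apply' deriv n v).symm
  have d1 : deriv^[1] v = deriv v := congrFun (Function.iterate_one deriv) v
  have dfv : ∀ x, DifferentiableAt ℝ v x := fun x => df 0 x
  have dfd : ∀ x, DifferentiableAt ℝ (deriv v) x := fun x => d1 ▸ df 1 x
  have ctd : Continuous (deriv v) := d1 ▸ ct 1
  have dd' : deriv (deriv v) = deriv^[2] v := by rw [← d1]; exact dd 1
  have hper : ∀ n, Function.Periodic (deriv^[n] v) (2*π) := periodic_iter hp
  have hperd : Function.Periodic (deriv v) (2*π) := d1 ▸ hper 1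
  -- the sup bound
  set A := ⨆ x : ℝ, |deriv v x| with hAdef
  have hbdd : BddAbove (Set.range fun x : ℝ => |deriv v x|) := by
    obtain ⟨M, hM⟩ := (isCompact_Icc (a := (0:ℝ)) (b := 2*π)).exists_bound_of_continuousOn
      ctd.continuousOn
    refine ⟨M, ?_⟩
    rintro _ ⟨x, rfl⟩
    obtain ⟨y, hy, hxy⟩ := hperd.exists_mem_Ico₀ (by positivity) x
    show |deriv v x| ≤ M
    rw [hxy]
    simpa using hM y (Set.mem_Icc.mpr ⟨hy.1, le_of_lt hy.2⟩)
  have hA : ∀ x, |deriv v x| ≤ A := fun x => le_ciSup hbdd x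
  have hA0 : 0 ≤ A := (abs_nonneg _).trans (hA 0)
  -- named integrals
  set P := ∫ x in (-π)..π, (deriv^[2] v x * deriv^[3] v x)^2 with hPdef
  set Q := ∫ x in (-π)..π, ((deriv^[2] v x)^6) with hQdef
  set R := ∫ x in (-π)..π, (deriv^[4] v x)^2 with hRdef
  have hP0 : 0 ≤ P := intervalIntegral.integral_nonneg hab (fun x _ => sq_nonneg _)
  have hQ0 : 0 ≤ Q := intervalIntegral.integral_nonneg hab (fun x _ => by positivity)
  have hR0 : 0 ≤ R := intervalIntegral.integral_nonneg hab (fun x _ => sq_nonneg _)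
  set sP := Real.sqrt P with hsPdef
  set sQ := Real.sqrt Q with hsQdef
  set sR := Real.sqrt R with hsRdef
  have hsP : sP^2 = P := Real.sq_sqrt hP0
  have hsQ : sQ^2 = Q := Real.sq_sqrt hQ0
  have hsR : sR^2 = R := Real.sq_sqrt hR0
  have hsP0 : 0 ≤ sP := Real.sqrt_nonneg _
  have hsQ0 : 0 ≤ sQ := Real.sqrt_nonneg _
  have hsR0 : 0 ≤ sR := Real.sqrt_nonneg _
  -- IBP identity 1 : 3 P + ∫ (d2)^3 d4 = 0
  have key1 : 3*P + (∫ x in (-π)..π, (deriv^[2] v x)^3 * deriv^[4] v x) = 0 := by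
    have hder : deriv (fun x => (deriv^[2] v x)^3 * deriv^[3] v x)
        = fun x => 3*(deriv^[2] v x * deriv^[3] v x)^2
            + (deriv^[2] v x)^3 * deriv^[4] v x := by
      funext x
      rw [deriv_fun_mul ((df 2 x).fun_pow 3) (df 3 x), deriv_fun_pow (df 2 x), dd 2, dd 3]
      ring
    have h0 : (∫ x in (-π)..π, (3*(deriv^[2] v x * deriv^[3] v x)^2
        + (deriv^[2] v x)^3 * deriv^[4] v x)) = 0 := by
      apply ibp_zero (((sm 2).pow 3).mul (sm 3)) _ hder
      intro x
      simp only []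
      rw [hper 2 x, hper 3 x]
    rw [intervalIntegral.integral_add
        ((continuous_const.fun_mul (((ct 2).fun_mul (ct 3)).fun_pow 2)).intervalIntegrable _ _)
        ((((ct 2).fun_pow 3).fun_mul (ct 4)).intervalIntegrable _ _),
      intervalIntegral.integral_const_mul] at h0
    rw [← hPdef] at h0
    linarith [h0]
  -- IBP identity 2 : Q + 5 ∫ d1 (d2)^4 d3 = 0
  have key2 : Q + 5*(∫ x in (-π)..π, deriv v x * ((deriv^[2] v x)^4 * deriv^[3] v x)) = 0 := by
    have hder : deriv (fun x => deriv v x * (deriv^[2] v x)^5)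
        = fun x => (deriv^[2] v x)^6
            + 5*(deriv v x * ((deriv^[2] v x)^4 * deriv^[3] v x)) := by
      funext x
      rw [deriv_fun_mul (dfd x) ((df 2 x).fun_pow 5), deriv_fun_pow (df 2 x), dd', dd 2]
      ring
    have h0 : (∫ x in (-π)..π, ((deriv^[2] v x)^6
        + 5*(deriv v x * ((deriv^[2] v x)^4 * deriv^[3] v x)))) = 0 := by
      apply ibp_zero ((d1 ▸ sm 1).mul ((sm 2).pow 5)) _ hder
      intro x
      simp only []
      rw [hperd x, hper 2 x]
    rw [intervalIntegral.integral_add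
        (((ct 2).fun_pow 6).intervalIntegrable _ _)
        ((continuous_const.fun_mul (ctd.fun_mul (((ct 2).fun_pow 4).fun_mul (ct 3)))).intervalIntegrable _ _),
      intervalIntegral.integral_const_mul] at h0
    rw [← hQdef] at h0
    linarith [h0]
  -- IBP identity 3 : K + 2 L = 0
  set K := ∫ x in (-π)..π, deriv v x * (deriv^[4] v x)^2 with hKdef
  set L := ∫ x in (-π)..π, v x * deriv^[5] v x * deriv^[4] v x with hLdef
  have key3 : K + 2*L = 0 := by
    have hder : deriv (fun x => v x * (deriv^[4] v x)^2)
        = fun x => deriv v x * (deriv^[4] v x)^2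
            + 2*(v x * deriv^[5] v x * deriv^[4] v x) := by
      funext x
      rw [deriv_fun_mul (dfv x) ((df 4 x).fun_pow 2), deriv_fun_pow (df 4 x), dd 4]
      ring
    have h0 : (∫ x in (-π)..π, (deriv v x * (deriv^[4] v x)^2
        + 2*(v x * deriv^[5] v x * deriv^[4] v x))) = 0 := by
      apply ibp_zero (hv'.mul ((sm 4).pow 2)) _ hder
      intro x
      simp only []
      rw [hp x, hper 4 x]
    rw [intervalIntegral.integral_add
        ((ctd.fun_mul ((ct 4).fun_pow 2)).intervalIntegrable _ _)
        ((continuous_const.fun_mul ((hv'.continuous.fun_mul (ct 5)).fun_mul (ct 4))).intervalIntegrable _ _),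
      intervalIntegral.integral_const_mul] at h0
    rw [← hKdef, ← hLdef] at h0
    linarith [h0]
  -- Cauchy-Schwarz bounds
  -- (1) : 3 P ≤ sQ * sR
  have b1 : 3*P ≤ sQ * sR := by
    have habs := cs_abs (f := fun x => (deriv^[2] v x)^3) (g := fun x => deriv^[4] v x)
      ((ct 2).pow 3) (ct 4)
    have hq : (∫ x in (-π)..π, ((deriv^[2] v x)^3)^2) = Q := by
      rw [hQdef]; apply intervalIntegral.integral_congr; intro x _; ring
    rw [hq] at habs
    have h3 : 3*P = -(∫ x in (-π)..π, (deriv^[2] v x)^3 * deriv^[4] v x) := by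
      linarith [key1]
    rw [h3]
    calc -(∫ x in (-π)..π, (deriv^[2] v x)^3 * deriv^[4] v x)
        ≤ |∫ x in (-π)..π, (deriv^[2] v x)^3 * deriv^[4] v x| := neg_le_abs _
      _ ≤ sQ * sR := habs
  -- (2) : Q ≤ 5 A (sQ * sP)
  have b2 : Q ≤ 5*A*(sQ * sP) := by
    have h5 : Q = -(5*(∫ x in (-π)..π, deriv v x * ((deriv^[2] v x)^4 * deriv^[3] v x))) := by
      linarith [key2]
    have hstep1 : |∫ x in (-π)..π, deriv v x * ((deriv^[2] v x)^4 * deriv^[3] v x)|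
        ≤ ∫ x in (-π)..π, |deriv v x * ((deriv^[2] v x)^4 * deriv^[3] v x)| :=
      intervalIntegral.abs_integral_le_integral_abs hab
    have hstep2 : (∫ x in (-π)..π, |deriv v x * ((deriv^[2] v x)^4 * deriv^[3] v x)|)
        ≤ ∫ x in (-π)..π, A * (|deriv^[2] v x|^3 * |deriv^[2] v x * deriv^[3] v x|) := by
      apply intervalIntegral.integral_mono_on hab
      · exact ((ctd.mul (((ct 2).pow 4).mul (ct 3))).abs).intervalIntegrable _ _
      · exact (continuous_const.mul (((ct 2).abs.pow 3).mul ((ct 2).mul (ct 3)).abs)).intervalIntegrable _ _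
      · intro x _
        have heq : |deriv v x * ((deriv^[2] v x)^4 * deriv^[3] v x)|
            = |deriv v x| * (|deriv^[2] v x|^3 * |deriv^[2] v x * deriv^[3] v x|) := by
          rw [abs_mul, abs_mul, abs_mul, abs_pow]
          ring
        rw [heq]
        exact mul_le_mul_of_nonneg_right (hA x) (by positivity)
    have hcs := cs_abs (f := fun x => |deriv^[2] v x|^3)
      (g := fun x => |deriv^[2] v x * deriv^[3] v x|) ((ct 2).abs.pow 3) ((ct 2).mul (ct 3)).abs
    have hq2 : (∫ x in (-π)..π, (|deriv^[2] v x|^3)^2) = Q := by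
      rw [hQdef]; apply intervalIntegral.integral_congr; intro x _
      beta_reduce
      rw [← pow_mul, pow_abs, show 3*2 = 6 from rfl]
      exact abs_of_nonneg (by positivity)
    have hp2 : (∫ x in (-π)..π, (|deriv^[2] v x * deriv^[3] v x|)^2) = P := by
      rw [hPdef]; apply intervalIntegral.integral_congr; intro x _
      beta_reduce
      rw [sq_abs]
    rw [hq2, hp2] at hcs
    have hstep3 : (∫ x in (-π)..π, |deriv^[2] v x|^3 * |deriv^[2] v x * deriv^[3] v x|)
        ≤ sQ * sP := le_trans (le_abs_self _) hcs
    have hstep4 : (∫ x in (-π)..π, A * (|deriv^[2] v x|^3 * |deriv^[2] v x * deriv^[3] v x|))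
        = A * ∫ x in (-π)..π, |deriv^[2] v x|^3 * |deriv^[2] v x * deriv^[3] v x| :=
      intervalIntegral.integral_const_mul _ _
    calc Q = -(5*(∫ x in (-π)..π, deriv v x * ((deriv^[2] v x)^4 * deriv^[3] v x))) := h5
      _ ≤ 5*|∫ x in (-π)..π, deriv v x * ((deriv^[2] v x)^4 * deriv^[3] v x)| := by
          have := neg_le_abs (∫ x in (-π)..π, deriv v x * ((deriv^[2] v x)^4 * deriv^[3] v x))
          linarith
      _ ≤ 5*(A * ∫ x in (-π)..π, |deriv^[2] v x|^3 * |deriv^[2] v x * deriv^[3] v x|) := by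
          rw [← hstep4]
          have := le_trans hstep1 hstep2
          linarith
      _ ≤ 5*(A*(sQ * sP)) := by
          have := mul_le_mul_of_nonneg_left hstep3 hA0
          linarith
      _ = 5*A*(sQ * sP) := by ring
  -- (3) sQ ≤ 5 A sP
  have b3 : sQ ≤ 5*A*sP := by
    rcases eq_or_lt_of_le hsQ0 with h | h
    · rw [← h]
      exact mul_nonneg (mul_nonneg (by norm_num) hA0) hsP0
    · have hh : sQ*sQ ≤ sQ*(5*A*sP) := by
        calc sQ*sQ = Q := by rw [← hsQ]; ring
          _ ≤ 5*A*(sQ*sP) := b2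
          _ = sQ*(5*A*sP) := by ring
      exact le_of_mul_le_mul_left hh h
  -- (4)-(5) : 3 sP ≤ 5 A sR
  have b5 : 3*sP ≤ 5*A*sR := by
    rcases eq_or_lt_of_le hsP0 with h | h
    · rw [← h]
      simp only [mul_zero]
      exact mul_nonneg (mul_nonneg (by norm_num) hA0) hsR0
    · have h4 : 3*P ≤ 5*A*sP*sR := by
        calc 3*P ≤ sQ*sR := b1
          _ ≤ (5*A*sP)*sR := mul_le_mul_of_nonneg_right b3 hsR0
          _ = 5*A*sP*sR := by ring
      have hh : sP*(3*sP) ≤ sP*(5*A*sR) := by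
        calc sP*(3*sP) = 3*P := by rw [← hsP]; ring
          _ ≤ 5*A*sP*sR := h4
          _ = sP*(5*A*sR) := by ring
      exact le_of_mul_le_mul_left hh h
  -- (6) J bound
  set J := ∫ x in (-π)..π, (deriv^[2] v x * deriv^[3] v x) * deriv^[4] v x with hJdef
  have bJ : 3*|J| ≤ 5*A*R := by
    have hcs := cs_abs (f := fun x => deriv^[2] v x * deriv^[3] v x)
      (g := fun x => deriv^[4] v x) ((ct 2).mul (ct 3)) (ct 4)
    beta_reduce at hcs
    rw [← hPdef, ← hRdef, ← hJdef, ← hsPdef, ← hsRdef] at hcs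
    have h1 : 3*|J| ≤ 3*(sP*sR) := by linarith
    have h2 : 3*sP*sR ≤ 5*A*sR*sR := mul_le_mul_of_nonneg_right b5 hsR0
    have h3 : sR*sR = R := by rw [← hsR]; ring
    have h2' : 3*(sP*sR) ≤ 5*A*R := by
      calc 3*(sP*sR) = 3*sP*sR := by ring
        _ ≤ 5*A*sR*sR := h2
        _ = 5*A*(sR*sR) := by ring
        _ = 5*A*R := by rw [h3]
    linarith
  -- (7) K bound
  have bK : |K| ≤ A*R := by
    have h1 : |K| ≤ ∫ x in (-π)..π, |deriv v x * (deriv^[4] v x)^2| :=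
      intervalIntegral.abs_integral_le_integral_abs hab
    have h2 : (∫ x in (-π)..π, |deriv v x * (deriv^[4] v x)^2|)
        ≤ ∫ x in (-π)..π, A * (deriv^[4] v x)^2 := by
      apply intervalIntegral.integral_mono_on hab
      · exact ((ctd.mul ((ct 4).pow 2)).abs).intervalIntegrable _ _
      · exact (continuous_const.mul ((ct 4).pow 2)).intervalIntegrable _ _
      · intro x _
        rw [abs_mul, abs_of_nonneg (sq_nonneg (deriv^[4] v x))]
        exact mul_le_mul_of_nonneg_right (hA x) (sq_nonneg _)
    have h3 : (∫ x in (-π)..π, A * (deriv^[4] v x)^2) = A*R :=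
      intervalIntegral.integral_const_mul _ _
    linarith
  -- (8) L bound
  have bL : |L| ≤ A*R/2 := by
    have hL : L = -K/2 := by linarith [key3]
    rw [hL]
    rw [abs_div, abs_neg]
    have : |K| / |(2:ℝ)| ≤ A*R/2 := by
      rw [abs_two]
      linarith [bK]
    exact this
  -- main decomposition
  have main_eq : (∫ x in (-π)..π,
      (deriv^[4] (fun y => v y * deriv v y) x) * (deriv^[4] v x))
      = 10*J + (5*K + L) := by
    have hcongr : (∫ x in (-π)..π,
        (deriv^[4] (fun y => v y * deriv v y) x) * (deriv^[4] v x))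
        = ∫ x in (-π)..π, (10*((deriv^[2] v x * deriv^[3] v x) * deriv^[4] v x)
            + (5*(deriv v x * (deriv^[4] v x)^2) + v x * deriv^[5] v x * deriv^[4] v x)) := by
      apply intervalIntegral.integral_congr
      intro x _
      beta_reduce
      rw [congrFun (leibniz4 hv') x]
      ring
    rw [hcongr]
    have i1 : IntervalIntegrable
        (fun x => 10*((deriv^[2] v x * deriv^[3] v x) * deriv^[4] v x)) volume (-π) π :=
      (continuous_const.mul (((ct 2).mul (ct 3)).mul (ct 4))).intervalIntegrable _ _
    have i2 : IntervalIntegrable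
        (fun x => 5*(deriv v x * (deriv^[4] v x)^2)) volume (-π) π :=
      (continuous_const.mul (ctd.mul ((ct 4).pow 2))).intervalIntegrable _ _
    have i3 : IntervalIntegrable
        (fun x => v x * deriv^[5] v x * deriv^[4] v x) volume (-π) π :=
      ((hv'.continuous.mul (ct 5)).mul (ct 4)).intervalIntegrable _ _
    rw [intervalIntegral.integral_add i1 (i2.add i3),
      intervalIntegral.integral_add i2 i3,
      intervalIntegral.integral_const_mul, intervalIntegral.integral_const_mul]
  -- conclusion
  rw [main_eq]
  have htri : |10*J + (5*K + L)| ≤ 10*|J| + (5*|K| + |L|) := by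
    calc |10*J + (5*K + L)| ≤ |10*J| + |5*K + L| := abs_add_le _ _
      _ ≤ |10*J| + (|5*K| + |L|) := by linarith [abs_add_le (5*K) L]
      _ = 10*|J| + (5*|K| + |L|) := by rw [abs_mul, abs_mul]; norm_num
  have hAR : 0 ≤ A*R := mul_nonneg hA0 hR0
  calc |10*J + (5*K + L)| ≤ 10*|J| + (5*|K| + |L|) := htri
    _ ≤ 23*A*R := by linarith [bJ, bK, bL]
end

section
/- For smooth 2π-periodic functions u and v, the combination I₃ + K₁ := -∫ ∂ₓ³(v∂ₓ³v)∂ₓ³u dx + ∫ ∂ₓ⁵u · v · ∂ₓ⁴v dx satisfies I₃ + K₁ = ∫ ∂ₓ⁴u ∂ₓ⁴v ∂ₓv dx + ∫ ∂ₓ⁴u ∂ₓ²v ∂ₓ³v dx, and hence |I₃ + K₁| ≤ C‖∂ₓ⁴u‖_{L²}‖∂ₓ⁴v‖_{L²}(‖∂ₓv‖_{L^∞} + ‖∂ₓ²v‖_{L^∞}). -/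
open Real intervalIntegral MeasureTheory
open scoped ContDiff

private lemma periodic_deriv_aux {f : ℝ → ℝ} {c : ℝ} (h : Function.Periodic f c) :
    Function.Periodic (deriv f) c := by
  intro x
  rw [← deriv_comp_add_const]
  congr 1
  funext y
  exact h y

private lemma periodic_iter_aux {f : ℝ → ℝ} {c : ℝ} (h : Function.Periodic f c) (n : ℕ) :
    Function.Periodic (deriv^[n] f) c := by
  induction n with
  | zero => exact h
  | succ n ih =>
    rw [Function.iterate_succ_apply']
    exact periodic_deriv_aux ih

/-- Integration by parts for smooth `2π`-periodic functions: boundary terms vanish. -/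
private lemma ibp_aux {f g : ℝ → ℝ} (hf : ContDiff ℝ ∞ f) (hg : ContDiff ℝ ∞ g)
    (pf : Function.Periodic f (2*π)) (pg : Function.Periodic g (2*π)) :
    ∫ x in (-π)..π, deriv f x * g x = -∫ x in (-π)..π, f x * deriv g x := by
  have h1 : (1 : WithTop ℕ∞) ≤ ∞ := by exact_mod_cast le_top
  have hdf : ∀ x ∈ Set.uIcc (-π) π, HasDerivAt f (deriv f x) x :=
    fun x _ => (hf.differentiable (by simp) x).hasDerivAt
  have hdg : ∀ x ∈ Set.uIcc (-π) π, HasDerivAt g (deriv g x) x :=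
    fun x _ => (hg.differentiable (by simp) x).hasDerivAt
  have hcf : Continuous (deriv f) := (hf.iterate_deriv 1).continuous
  have hcg : Continuous (deriv g) := (hg.iterate_deriv 1).continuous
  have h := integral_deriv_mul_eq_sub hdf hdg (hcf.intervalIntegrable _ _)
    (hcg.intervalIntegrable _ _)
  have hfe : f π = f (-π) := by
    have := pf (-π); rwa [show -π + 2*π = π by ring] at this
  have hge : g π = g (-π) := by
    have := pg (-π); rwa [show -π + 2*π = π by ring] at this
  rw [hfe, hge, sub_self] at h
  have hsplit : (∫ x in (-π)..π, deriv f x * g x + f x * deriv g x)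
      = (∫ x in (-π)..π, deriv f x * g x) + ∫ x in (-π)..π, f x * deriv g x :=
    integral_add ((hcf.mul hg.continuous).intervalIntegrable _ _)
      ((hf.continuous.mul hcg).intervalIntegrable _ _)
  rw [hsplit] at h
  linarith

/-- Cauchy–Schwarz for interval integrals of continuous functions. -/
private lemma cs_aux {f g : ℝ → ℝ} (hf : Continuous f) (hg : Continuous g) :
    (∫ x in (-π)..π, f x * g x) ≤
      Real.sqrt (∫ x in (-π)..π, f x ^ 2) * Real.sqrt (∫ x in (-π)..π, g x ^ 2) := by
  have hab : (-π : ℝ) ≤ π := by linarith [pi_pos]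
  set A := ∫ x in (-π)..π, f x ^ 2 with hA
  set B := ∫ x in (-π)..π, f x * g x with hB
  set Cq := ∫ x in (-π)..π, g x ^ 2 with hC
  have hAnn : 0 ≤ A := integral_nonneg hab fun x _ => sq_nonneg _
  have hCnn : 0 ≤ Cq := integral_nonneg hab fun x _ => sq_nonneg _
  have key : ∀ t : ℝ, 0 ≤ A * (t * t) + (2*B) * t + Cq := by
    intro t
    have h0 : 0 ≤ ∫ x in (-π)..π, (t * f x + g x)^2 :=
      integral_nonneg hab fun x _ => sq_nonneg _
    have hexp : (∫ x in (-π)..π, (t * f x + g x)^2)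
        = A * (t*t) + (2*B)*t + Cq := by
      have hre : (fun x => (t * f x + g x)^2)
          = fun x => (t*t) * f x ^2 + ((2*t) * (f x * g x) + g x ^2) := by
        funext x; ring
      have i1 : IntervalIntegrable (fun x => (t*t) * f x ^2) volume (-π) π :=
        ((continuous_const.mul (hf.pow 2)) : Continuous _).intervalIntegrable _ _
      have i2 : IntervalIntegrable (fun x => (2*t) * (f x * g x)) volume (-π) π :=
        ((continuous_const.mul (hf.mul hg)) : Continuous _).intervalIntegrable _ _
      have i3 : IntervalIntegrable (fun x => g x ^2) volume (-π) π :=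
        ((hg.pow 2) : Continuous _).intervalIntegrable _ _
      rw [hre, integral_add i1 (i2.add i3), integral_add i2 i3,
        intervalIntegral.integral_const_mul, intervalIntegral.integral_const_mul]
      rw [hA, hB, hC]; ring
    linarith [hexp ▸ h0]
  have hd := discrim_le_zero key
  rw [discrim] at hd
  have hB2 : B^2 ≤ A*Cq := by nlinarith
  calc B ≤ |B| := le_abs_self _
    _ = Real.sqrt (B^2) := (Real.sqrt_sq_eq_abs B).symm
    _ ≤ Real.sqrt (A*Cq) := Real.sqrt_le_sqrt hB2
    _ = Real.sqrt A * Real.sqrt Cq := Real.sqrt_mul hAnn Cq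

private lemma cs_abs_aux {f g : ℝ → ℝ} (hf : Continuous f) (hg : Continuous g) :
    (∫ x in (-π)..π, |f x| * |g x|) ≤
      Real.sqrt (∫ x in (-π)..π, f x ^ 2) * Real.sqrt (∫ x in (-π)..π, g x ^ 2) := by
  have := cs_aux hf.abs hg.abs
  simpa [sq_abs] using this

private lemma abs_int_le_aux {g : ℝ → ℝ} (hg : Continuous g) :
    (∫ x in (-π)..π, |g x|) ≤ Real.sqrt (2*π) * Real.sqrt (∫ x in (-π)..π, g x ^ 2) := by
  have h := cs_abs_aux (f := fun _ => (1:ℝ)) continuous_const hg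
  simp only [abs_one, one_mul, one_pow] at h
  have h2 : (∫ x in (-π)..π, (1:ℝ)) = 2*π := by
    rw [intervalIntegral.integral_const, smul_eq_mul, mul_one]; ring
  rw [h2] at h
  exact h

private lemma bdd_abs_aux {f : ℝ → ℝ} (hf : Continuous f) (hp : Function.Periodic f (2*π)) :
    BddAbove (Set.range fun x => |f x|) := by
  obtain ⟨x₀, _, hx₀⟩ := (isCompact_Icc (a := -π) (b := π)).exists_isMaxOn
    ⟨-π, by constructor <;> linarith [pi_pos]⟩ hf.abs.continuousOn
  refine ⟨|f x₀|, ?_⟩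
  rintro r ⟨x, rfl⟩
  obtain ⟨y, hy, hxy⟩ := hp.exists_mem_Ico two_pi_pos x (-π)
  have hy' : y ∈ Set.Icc (-π) π := by
    rcases hy with ⟨h1, h2⟩
    exact ⟨h1, by linarith⟩
  simp only [hxy]
  exact hx₀ hy'

/-- Cancellation in the combination `I₃ + K₁` for smooth 2π-periodic `u, v`:
`-∫ ∂ₓ³(v∂ₓ³v)∂ₓ³u + ∫ ∂ₓ⁵u·v·∂ₓ⁴v = ∫ ∂ₓ⁴u ∂ₓ⁴v ∂ₓv + ∫ ∂ₓ⁴u ∂ₓ²v ∂ₓ³v`, whence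
`|I₃ + K₁| ≤ C‖∂ₓ⁴u‖_{L²}‖∂ₓ⁴v‖_{L²}(‖∂ₓv‖_{L^∞} + ‖∂ₓ²v‖_{L^∞})`. -/
theorem stmt15 :
    ∃ C : ℝ, 0 < C ∧
      ∀ u v : ℝ → ℝ, ContDiff ℝ (⊤ : ℕ∞) u → ContDiff ℝ (⊤ : ℕ∞) v →
        Function.Periodic u (2*π) → Function.Periodic v (2*π) →
        ((-∫ x in (-π)..π, (deriv^[3] (fun y => v y * deriv^[3] v y) x) * (deriv^[3] u x))
            + (∫ x in (-π)..π, (deriv^[5] u x) * v x * (deriv^[4] v x))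
          = (∫ x in (-π)..π, (deriv^[4] u x) * (deriv^[4] v x) * deriv v x)
            + (∫ x in (-π)..π, (deriv^[4] u x) * (deriv^[2] v x) * (deriv^[3] v x))) ∧
        |(-∫ x in (-π)..π, (deriv^[3] (fun y => v y * deriv^[3] v y) x) * (deriv^[3] u x))
            + (∫ x in (-π)..π, (deriv^[5] u x) * v x * (deriv^[4] v x))|
          ≤ C * Real.sqrt (∫ x in (-π)..π, (deriv^[4] u x)^2)
              * Real.sqrt (∫ x in (-π)..π, (deriv^[4] v x)^2)
              * ((⨆ x : ℝ, |deriv v x|) + (⨆ x : ℝ, |deriv^[2] v x|)) := by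
  refine ⟨2*π, two_pi_pos, ?_⟩
  intro u v hu' hv' pu pv
  have hu : ContDiff ℝ ∞ u := hu'.of_le (by simp)
  have hv : ContDiff ℝ ∞ v := hv'.of_le (by simp)
  have h1i : (1 : WithTop ℕ∞) ≤ ∞ := by exact_mod_cast le_top
  have hab : (-π : ℝ) ≤ π := by linarith [pi_pos]
  have hab' : (-π : ℝ) < π := by linarith [pi_pos]
  -- differentiability / continuity of iterated derivatives
  have dv0 : Differentiable ℝ v := hv.differentiable (by simp)
  have dv1 : Differentiable ℝ (deriv v) := (hv.iterate_deriv 1).differentiable (by simp)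
  have dv2 : Differentiable ℝ (deriv (deriv v)) := (hv.iterate_deriv 2).differentiable (by simp)
  have dv3 : Differentiable ℝ (deriv (deriv (deriv v))) :=
    (hv.iterate_deriv 3).differentiable (by simp)
  have dv4 : Differentiable ℝ (deriv (deriv (deriv (deriv v)))) :=
    (hv.iterate_deriv 4).differentiable (by simp)
  have cv0 : Continuous v := hv.continuous
  have cv1 : Continuous (deriv v) := (hv.iterate_deriv 1).continuous
  have cv2 : Continuous (deriv (deriv v)) := (hv.iterate_deriv 2).continuous
  have cv3 : Continuous (deriv (deriv (deriv v))) := (hv.iterate_deriv 3).continuous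
  have cv4 : Continuous (deriv (deriv (deriv (deriv v)))) := (hv.iterate_deriv 4).continuous
  have cv5 : Continuous (deriv (deriv (deriv (deriv (deriv v))))) :=
    (hv.iterate_deriv 5).continuous
  have cu4 : Continuous (deriv (deriv (deriv (deriv u)))) := (hu.iterate_deriv 4).continuous
  -- periodicity
  have p1v : Function.Periodic (deriv v) (2*π) := periodic_iter_aux pv 1
  have p2v : Function.Periodic (deriv (deriv v)) (2*π) := periodic_iter_aux pv 2
  have p3v : Function.Periodic (deriv (deriv (deriv v))) (2*π) := periodic_iter_aux pv 3
  have p4v : Function.Periodic (deriv (deriv (deriv (deriv v)))) (2*π) := periodic_iter_aux pv 4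
  -- the product function w
  have hwcd : ContDiff ℝ ∞ (fun y => v y * deriv (deriv (deriv v)) y) :=
    hv.mul (hv.iterate_deriv 3)
  have pw : Function.Periodic (fun y => v y * deriv (deriv (deriv v)) y) (2*π) := by
    intro x
    simp only [pv x, p3v x]
  -- first derivative of w
  have hw1 : deriv (fun y => v y * deriv (deriv (deriv v)) y)
      = fun x => deriv v x * deriv (deriv (deriv v)) x
          + v x * deriv (deriv (deriv (deriv v))) x := by
    funext x
    rw [deriv_fun_mul (dv0 x) (dv3 x)]
  -- second derivative of w
  have hw2 : deriv (deriv (fun y => v y * deriv (deriv (deriv v)) y))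
      = fun x => (deriv (deriv v) x * deriv (deriv (deriv v)) x
            + deriv v x * deriv (deriv (deriv (deriv v))) x)
          + (deriv v x * deriv (deriv (deriv (deriv v))) x
            + v x * deriv (deriv (deriv (deriv (deriv v)))) x) := by
    rw [hw1]
    funext x
    rw [deriv_fun_add (f := fun y => deriv v y * deriv (deriv (deriv v)) y)
        (g := fun y => v y * deriv (deriv (deriv (deriv v))) y)
        ((dv1 x).mul (dv3 x)) ((dv0 x).mul (dv4 x)), deriv_fun_mul (dv1 x) (dv3 x),
      deriv_fun_mul (dv0 x) (dv4 x)]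
  -- derivative of v * v⁗
  have hk1 : deriv (fun y => v y * deriv (deriv (deriv (deriv v))) y)
      = fun x => deriv v x * deriv (deriv (deriv (deriv v))) x
          + v x * deriv (deriv (deriv (deriv (deriv v)))) x := by
    funext x
    rw [deriv_fun_mul (dv0 x) (dv4 x)]
  -- the main identity
  have heq : ((-∫ x in (-π)..π, (deriv^[3] (fun y => v y * deriv^[3] v y) x) * (deriv^[3] u x))
        + (∫ x in (-π)..π, (deriv^[5] u x) * v x * (deriv^[4] v x)))
      = (∫ x in (-π)..π, (deriv^[4] u x) * (deriv^[4] v x) * deriv v x)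
        + (∫ x in (-π)..π, (deriv^[4] u x) * (deriv^[2] v x) * (deriv^[3] v x)) := by
    simp only [show deriv^[3] v = deriv (deriv (deriv v)) from rfl,
      show deriv^[2] v = deriv (deriv v) from rfl,
      show deriv^[4] v = deriv (deriv (deriv (deriv v))) from rfl,
      show deriv^[3] u = deriv (deriv (deriv u)) from rfl,
      show deriv^[4] u = deriv (deriv (deriv (deriv u))) from rfl,
      show deriv^[5] u = deriv (deriv (deriv (deriv (deriv u)))) from rfl]
    simp only [show deriv^[3] (fun y => v y * deriv (deriv (deriv v)) y)
        = deriv (deriv (deriv (fun y => v y * deriv (deriv (deriv v)) y))) from rfl]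
    -- first integration by parts
    have hI := ibp_aux (f := deriv (deriv (fun y => v y * deriv (deriv (deriv v)) y)))
      (g := deriv (deriv (deriv u)))
      (hwcd.iterate_deriv 2) (hu.iterate_deriv 3)
      (periodic_iter_aux pw 2) (periodic_iter_aux pu 3)
    -- second integration by parts
    have hK := ibp_aux (f := deriv (deriv (deriv (deriv u))))
      (g := fun y => v y * deriv (deriv (deriv (deriv v))) y)
      (hu.iterate_deriv 4) (hv.mul (hv.iterate_deriv 4))
      (periodic_iter_aux pu 4) (by intro x; simp only [pv x, p4v x])
    simp only [hk1] at hK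
    rw [hI]
    have hKgoal : (∫ x in (-π)..π,
          deriv (deriv (deriv (deriv (deriv u)))) x * v x
            * deriv (deriv (deriv (deriv v))) x)
        = -∫ x in (-π)..π, deriv (deriv (deriv (deriv u))) x
            * (deriv v x * deriv (deriv (deriv (deriv v))) x
              + v x * deriv (deriv (deriv (deriv (deriv v)))) x) := by
      rw [← hK]
      congr 1
      funext x
      ring
    rw [hKgoal, neg_neg]
    have hIrw : (∫ x in (-π)..π,
          deriv (deriv (fun y => v y * deriv (deriv (deriv v)) y)) x
            * deriv (deriv (deriv (deriv u))) x)
        = ∫ x in (-π)..π,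
            ((deriv (deriv v) x * deriv (deriv (deriv v)) x
              + deriv v x * deriv (deriv (deriv (deriv v))) x)
            + (deriv v x * deriv (deriv (deriv (deriv v))) x
              + v x * deriv (deriv (deriv (deriv (deriv v)))) x))
            * deriv (deriv (deriv (deriv u))) x := by
      rw [hw2]
    rw [hIrw]
    have hint1 : IntervalIntegrable (fun x =>
        ((deriv (deriv v) x * deriv (deriv (deriv v)) x
              + deriv v x * deriv (deriv (deriv (deriv v))) x)
            + (deriv v x * deriv (deriv (deriv (deriv v))) x
              + v x * deriv (deriv (deriv (deriv (deriv v)))) x))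
            * deriv (deriv (deriv (deriv u))) x) volume (-π) π :=
      (((((cv2.mul cv3).add (cv1.mul cv4)).add ((cv1.mul cv4).add (cv0.mul cv5))).mul
        cu4)).intervalIntegrable _ _
    have hint2 : IntervalIntegrable (fun x =>
        deriv (deriv (deriv (deriv u))) x
            * (deriv v x * deriv (deriv (deriv (deriv v))) x
              + v x * deriv (deriv (deriv (deriv (deriv v)))) x)) volume (-π) π :=
      ((cu4.mul ((cv1.mul cv4).add (cv0.mul cv5)))).intervalIntegrable _ _
    rw [← sub_eq_add_neg, ← integral_sub hint1 hint2]
    have hint3 : IntervalIntegrable (fun x =>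
        deriv (deriv (deriv (deriv u))) x * deriv (deriv (deriv (deriv v))) x * deriv v x)
        volume (-π) π := ((cu4.mul cv4).mul cv1).intervalIntegrable _ _
    have hint4 : IntervalIntegrable (fun x =>
        deriv (deriv (deriv (deriv u))) x * deriv (deriv v) x * deriv (deriv (deriv v)) x)
        volume (-π) π := ((cu4.mul cv2).mul cv3).intervalIntegrable _ _
    rw [← integral_add hint3 hint4]
    apply integral_congr
    intro x _
    ring
  refine ⟨heq, ?_⟩
  rw [heq]
  -- now the bound
  simp only [show deriv^[3] v = deriv (deriv (deriv v)) from rfl,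
    show deriv^[2] v = deriv (deriv v) from rfl,
    show deriv^[4] v = deriv (deriv (deriv (deriv v))) from rfl,
    show deriv^[4] u = deriv (deriv (deriv (deriv u))) from rfl]
  set X := Real.sqrt (∫ x in (-π)..π, (deriv (deriv (deriv (deriv u))) x)^2) with hX
  set Y := Real.sqrt (∫ x in (-π)..π, (deriv (deriv (deriv (deriv v))) x)^2) with hY
  set Z := Real.sqrt (∫ x in (-π)..π, (deriv (deriv (deriv v)) x)^2) with hZ
  set M1 := ⨆ x : ℝ, |deriv v x| with hM1def
  set M2 := ⨆ x : ℝ, |deriv (deriv v) x| with hM2def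
  have hXnn : 0 ≤ X := Real.sqrt_nonneg _
  have hYnn : 0 ≤ Y := Real.sqrt_nonneg _
  have hZnn : 0 ≤ Z := Real.sqrt_nonneg _
  have hbdd1 : BddAbove (Set.range fun x => |deriv v x|) := bdd_abs_aux cv1 p1v
  have hbdd2 : BddAbove (Set.range fun x => |deriv (deriv v) x|) := bdd_abs_aux cv2 p2v
  have hM1 : ∀ x, |deriv v x| ≤ M1 := fun x => le_ciSup hbdd1 x
  have hM2 : ∀ x, |deriv (deriv v) x| ≤ M2 := fun x => le_ciSup hbdd2 x
  have hM1nn : 0 ≤ M1 := le_trans (abs_nonneg _) (hM1 0)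
  have hM2nn : 0 ≤ M2 := le_trans (abs_nonneg _) (hM2 0)
  -- bound on first integral
  have hP : |∫ x in (-π)..π, deriv (deriv (deriv (deriv u))) x
      * deriv (deriv (deriv (deriv v))) x * deriv v x| ≤ M1 * (X * Y) := by
    calc |∫ x in (-π)..π, deriv (deriv (deriv (deriv u))) x
          * deriv (deriv (deriv (deriv v))) x * deriv v x|
        ≤ ∫ x in (-π)..π, |deriv (deriv (deriv (deriv u))) x
          * deriv (deriv (deriv (deriv v))) x * deriv v x| :=
          abs_integral_le_integral_abs hab
      _ ≤ ∫ x in (-π)..π, (|deriv (deriv (deriv (deriv u))) x|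
          * |deriv (deriv (deriv (deriv v))) x|) * M1 := by
          apply integral_mono_on hab
            (((cu4.mul cv4).mul cv1).abs.intervalIntegrable _ _)
            ((((cu4.abs.mul cv4.abs)).mul continuous_const).intervalIntegrable _ _)
          intro x _
          show |deriv (deriv (deriv (deriv u))) x * deriv (deriv (deriv (deriv v))) x
            * deriv v x| ≤ (|deriv (deriv (deriv (deriv u))) x|
            * |deriv (deriv (deriv (deriv v))) x|) * M1
          rw [abs_mul, abs_mul]
          exact mul_le_mul_of_nonneg_left (hM1 x)
            (mul_nonneg (abs_nonneg _) (abs_nonneg _))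
      _ = (∫ x in (-π)..π, |deriv (deriv (deriv (deriv u))) x|
          * |deriv (deriv (deriv (deriv v))) x|) * M1 := integral_mul_const _ _
      _ ≤ (X * Y) * M1 := mul_le_mul_of_nonneg_right (cs_abs_aux cu4 cv4) hM1nn
      _ = M1 * (X * Y) := by ring
  -- bound on second integral
  have hQ : |∫ x in (-π)..π, deriv (deriv (deriv (deriv u))) x
      * deriv (deriv v) x * deriv (deriv (deriv v)) x| ≤ M2 * (X * Z) := by
    calc |∫ x in (-π)..π, deriv (deriv (deriv (deriv u))) x
          * deriv (deriv v) x * deriv (deriv (deriv v)) x|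
        ≤ ∫ x in (-π)..π, |deriv (deriv (deriv (deriv u))) x
          * deriv (deriv v) x * deriv (deriv (deriv v)) x| :=
          abs_integral_le_integral_abs hab
      _ ≤ ∫ x in (-π)..π, (|deriv (deriv (deriv (deriv u))) x|
          * |deriv (deriv (deriv v)) x|) * M2 := by
          apply integral_mono_on hab
            (((cu4.mul cv2).mul cv3).abs.intervalIntegrable _ _)
            ((((cu4.abs.mul cv3.abs)).mul continuous_const).intervalIntegrable _ _)
          intro x _
          show |deriv (deriv (deriv (deriv u))) x * deriv (deriv v) x
            * deriv (deriv (deriv v)) x| ≤ (|deriv (deriv (deriv (deriv u))) x|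
            * |deriv (deriv (deriv v)) x|) * M2
          rw [abs_mul, abs_mul]
          nlinarith [hM2 x, abs_nonneg (deriv (deriv (deriv (deriv u))) x),
            abs_nonneg (deriv (deriv (deriv v)) x), abs_nonneg (deriv (deriv v) x),
            mul_nonneg (abs_nonneg (deriv (deriv (deriv (deriv u))) x))
              (abs_nonneg (deriv (deriv (deriv v)) x))]
      _ = (∫ x in (-π)..π, |deriv (deriv (deriv (deriv u))) x|
          * |deriv (deriv (deriv v)) x|) * M2 := integral_mul_const _ _
      _ ≤ (X * Z) * M2 := mul_le_mul_of_nonneg_right (cs_abs_aux cu4 cv3) hM2nn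
      _ = M2 * (X * Z) := by ring
  -- M2 ≤ √(2π) Z
  have hM2Z : M2 ≤ Real.sqrt (2*π) * Z := by
    -- there is a zero of v''
    obtain ⟨c, hc, hceq⟩ := exists_hasDerivAt_eq_slope (deriv v) (deriv (deriv v)) hab'
      cv1.continuousOn (fun x _ => (dv1 x).hasDerivAt)
    have hvp : deriv v π = deriv v (-π) := by
      have := p1v (-π); rwa [show -π + 2*π = π by ring] at this
    rw [hvp, sub_self, zero_div] at hceq
    have hint3v : IntervalIntegrable (deriv (deriv (deriv v))) volume (-π) π :=
      cv3.intervalIntegrable _ _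
    have habs3 : (0:ℝ → ℝ) ≤ᵐ[volume.restrict (Set.Ioc (-π) π)]
        fun x => |deriv (deriv (deriv v)) x| := ae_of_all _ fun x => abs_nonneg _
    have hpt : ∀ y : ℝ, |deriv (deriv v) y| ≤ ∫ x in (-π)..π, |deriv (deriv (deriv v)) x| := by
      intro y
      obtain ⟨y', hy', hyeq⟩ := p2v.exists_mem_Ico two_pi_pos y (-π)
      rw [show -π + 2*π = π by ring] at hy'
      rw [hyeq]
      have hftc : (∫ x in c..y', deriv (deriv (deriv v)) x) = deriv (deriv v) y' - deriv (deriv v) c := by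
        apply integral_deriv_eq_sub (fun x _ => dv2 x)
        exact cv3.intervalIntegrable _ _
      have habs : |deriv (deriv v) y'| = |∫ x in c..y', deriv (deriv (deriv v)) x| := by
        rw [hftc, hceq, sub_zero]
      rw [habs]
      rcases le_total c y' with h | h
      · calc |∫ x in c..y', deriv (deriv (deriv v)) x|
            ≤ ∫ x in c..y', |deriv (deriv (deriv v)) x| := abs_integral_le_integral_abs h
          _ ≤ ∫ x in (-π)..π, |deriv (deriv (deriv v)) x| :=
            integral_mono_interval (le_of_lt hc.1) h (le_of_lt hy'.2) habs3
              (cv3.abs.intervalIntegrable _ _)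
      · rw [integral_symm, abs_neg]
        calc |∫ x in y'..c, deriv (deriv (deriv v)) x|
            ≤ ∫ x in y'..c, |deriv (deriv (deriv v)) x| := abs_integral_le_integral_abs h
          _ ≤ ∫ x in (-π)..π, |deriv (deriv (deriv v)) x| :=
            integral_mono_interval hy'.1 h (le_of_lt hc.2) habs3
              (cv3.abs.intervalIntegrable _ _)
    calc M2 ≤ ∫ x in (-π)..π, |deriv (deriv (deriv v)) x| := ciSup_le hpt
      _ ≤ Real.sqrt (2*π) * Z := abs_int_le_aux cv3
  -- Z² ≤ M2 √(2π) Y via integration by parts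
  have hZsq : Z^2 ≤ M2 * (Real.sqrt (2*π) * Y) := by
    have hZ2 : Z^2 = ∫ x in (-π)..π, (deriv (deriv (deriv v)) x)^2 :=
      Real.sq_sqrt (integral_nonneg hab fun x _ => sq_nonneg _)
    have hibp := ibp_aux (f := deriv (deriv v)) (g := deriv (deriv (deriv v)))
      (hv.iterate_deriv 2) (hv.iterate_deriv 3) p2v p3v
    have hsq : (∫ x in (-π)..π, (deriv (deriv (deriv v)) x)^2)
        = ∫ x in (-π)..π, deriv (deriv (deriv v)) x * deriv (deriv (deriv v)) x := by
      apply integral_congr; intro x _; ring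
    have step1 : (∫ x in (-π)..π, (deriv (deriv (deriv v)) x)^2)
        ≤ ∫ x in (-π)..π, M2 * |deriv (deriv (deriv (deriv v))) x| := by
      rw [hsq, hibp]
      calc -(∫ x in (-π)..π, deriv (deriv v) x * deriv (deriv (deriv (deriv v))) x)
          ≤ |∫ x in (-π)..π, deriv (deriv v) x * deriv (deriv (deriv (deriv v))) x| :=
            neg_le_abs _
        _ ≤ ∫ x in (-π)..π, |deriv (deriv v) x * deriv (deriv (deriv (deriv v))) x| :=
            abs_integral_le_integral_abs hab
        _ ≤ ∫ x in (-π)..π, M2 * |deriv (deriv (deriv (deriv v))) x| := by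
            apply integral_mono_on hab ((cv2.mul cv4).abs.intervalIntegrable _ _)
              ((continuous_const.mul cv4.abs).intervalIntegrable _ _)
            intro x _
            show |deriv (deriv v) x * deriv (deriv (deriv (deriv v))) x|
              ≤ M2 * |deriv (deriv (deriv (deriv v))) x|
            rw [abs_mul]
            exact mul_le_mul_of_nonneg_right (hM2 x) (abs_nonneg _)
    have step2 : (∫ x in (-π)..π, M2 * |deriv (deriv (deriv (deriv v))) x|)
        = M2 * ∫ x in (-π)..π, |deriv (deriv (deriv (deriv v))) x| :=
      integral_const_mul _ _
    have step3 : (∫ x in (-π)..π, |deriv (deriv (deriv (deriv v))) x|)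
        ≤ Real.sqrt (2*π) * Y := abs_int_le_aux cv4
    rw [hZ2]
    calc (∫ x in (-π)..π, (deriv (deriv (deriv v)) x)^2)
        ≤ M2 * ∫ x in (-π)..π, |deriv (deriv (deriv (deriv v))) x| := by
          rw [← step2]; exact step1
      _ ≤ M2 * (Real.sqrt (2*π) * Y) := mul_le_mul_of_nonneg_left step3 hM2nn
  -- Z ≤ 2π Y
  have hsqrt2pi : Real.sqrt (2*π) * Real.sqrt (2*π) = 2*π :=
    Real.mul_self_sqrt (le_of_lt two_pi_pos)
  have hZY : Z ≤ 2*π*Y := by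
    have h1 : Z^2 ≤ 2*π * Z * Y := by
      calc Z^2 ≤ M2 * (Real.sqrt (2*π) * Y) := hZsq
        _ ≤ (Real.sqrt (2*π) * Z) * (Real.sqrt (2*π) * Y) := by
            apply mul_le_mul_of_nonneg_right hM2Z
            exact mul_nonneg (Real.sqrt_nonneg _) hYnn
        _ = 2*π * Z * Y := by rw [show Real.sqrt (2*π) * Z * (Real.sqrt (2*π) * Y)
            = (Real.sqrt (2*π) * Real.sqrt (2*π)) * Z * Y by ring, hsqrt2pi]
    rcases eq_or_lt_of_le hZnn with h | h
    · rw [← h]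
      positivity
    · nlinarith
  -- finish
  calc |(∫ x in (-π)..π, deriv (deriv (deriv (deriv u))) x
          * deriv (deriv (deriv (deriv v))) x * deriv v x)
        + ∫ x in (-π)..π, deriv (deriv (deriv (deriv u))) x
          * deriv (deriv v) x * deriv (deriv (deriv v)) x|
      ≤ |∫ x in (-π)..π, deriv (deriv (deriv (deriv u))) x
          * deriv (deriv (deriv (deriv v))) x * deriv v x|
        + |∫ x in (-π)..π, deriv (deriv (deriv (deriv u))) x
          * deriv (deriv v) x * deriv (deriv (deriv v)) x| := abs_add_le _ _
    _ ≤ M1 * (X * Y) + M2 * (X * Z) := add_le_add hP hQ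
    _ ≤ M1 * (X * Y) + M2 * (X * (2*π*Y)) := by
        apply add_le_add le_rfl
        apply mul_le_mul_of_nonneg_left _ hM2nn
        exact mul_le_mul_of_nonneg_left hZY hXnn
    _ ≤ 2*π * X * Y * (M1 + M2) := by
        nlinarith [mul_nonneg (mul_nonneg hXnn hYnn) hM1nn, pi_gt_three,
          mul_nonneg (mul_nonneg hXnn hYnn) hM2nn]
end
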